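/- arXiv:2509.20408 — 4 statements merged into one kernel-verified Lean document; each statement's English description precedes it below -/
import Mathlib

section
/- Let G be a finite directed acyclic graph with a source s0 and sink sf, and let F be a nonnegative edge flow satisfying flow conservation at every internal vertex (inflow equals outflow). If the total flow out of s0 is Z > 0, then the random walk that at each vertex chooses an outgoing edge with probability proportional to its flow value reaches sf almost surely, and the probability of reaching any terminal transition (edge into sf) from vertex v equals F(v→sf)/Z. -/
/-!
The visit probabilities are `u v = out v / Z` for every `v ≠ sf`: by induction along the
rank, the visit recursion turns into `u v = [v = s0] + in v / Z`, which is `out v / Z` by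
conservation (and by `in s0 = 0`, `out s0 = Z` at the source). Hence the edge `v → sf` is
taken with probability `F v sf / Z`, and these sum to `in sf / Z = 1` since the sink
absorbs the whole outflow of the source.
-/

open Finset

namespace FlowNetwork

variable {S : Type*} [Fintype S]

def inflow (F : S → S → ℝ) (v : S) : ℝ := ∑ w, F w v

def outflow (F : S → S → ℝ) (v : S) : ℝ := ∑ w, F v w

theorem sum_inflow_eq_sum_outflow (F : S → S → ℝ) :
    ∑ v, inflow F v = ∑ v, outflow F v :=
  sum_comm

theorem inflow_sink_eq_outflow_source {F : S → S → ℝ} {s0 sf : S} (hne : s0 ≠ sf)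
    (hno_in_s0 : ∀ v, F v s0 = 0) (hno_out_sf : ∀ v, F sf v = 0)
    (hcons : ∀ v, v ≠ s0 → v ≠ sf → inflow F v = outflow F v) :
    inflow F sf = outflow F s0 := by
  have hbalance : ∑ v, (inflow F v - outflow F v) = 0 := by
    rw [sum_sub_distrib, sum_inflow_eq_sum_outflow, sub_self]
  rw [Fintype.sum_eq_add s0 sf hne fun v hv => sub_eq_zero.2 (hcons v hv.1 hv.2)] at hbalance
  simp only [inflow, outflow, hno_in_s0, hno_out_sf, sum_const_zero] at hbalance ⊢
  linarith

theorem le_outflow {F : S → S → ℝ} (hF : ∀ v w, 0 ≤ F v w) (v w : S) :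
    F v w ≤ outflow F v :=
  single_le_sum (fun x _ => hF v x) (mem_univ w)

theorem mul_div_outflow_eq_div {F : S → S → ℝ} (hF : ∀ v w, 0 ≤ F v w) {w v : S} {Z : ℝ}
    (hZ : Z ≠ 0) (hpos : 0 < F w v) :
    outflow F w / Z * (F w v / outflow F w) = F w v / Z := by
  have : outflow F w ≠ 0 := (hpos.trans_le (le_outflow hF w v)).ne'
  field_simp

variable [DecidableEq S]

theorem visit_mul_transition_eq {F : S → S → ℝ} {s0 sf : S} (hF : ∀ v w, 0 ≤ F v w)
    {rk : S → ℕ} (hacyc : ∀ v w, 0 < F v w → rk v < rk w)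
    (hno_in_s0 : ∀ v, F v s0 = 0) (hno_out_sf : ∀ v, F sf v = 0)
    (hcons : ∀ v, v ≠ s0 → v ≠ sf → inflow F v = outflow F v)
    (hZ : outflow F s0 ≠ 0) {u : S → ℝ}
    (hu : ∀ v, u v = (if v = s0 then 1 else 0) + ∑ w, u w * (F w v / outflow F w))
    (w v : S) : u w * (F w v / outflow F w) = F w v / outflow F s0 := by
  induction hrk : rk w using Nat.strong_induction_on generalizing w v with
  | _ n ih =>
    rcases (hF w v).eq_or_lt with h0 | hpos
    · simp [← h0]
    have hw : w ≠ sf := by rintro rfl; simp [hno_out_sf] at hpos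
    have hin : ∑ x, u x * (F x w / outflow F x) = inflow F w / outflow F s0 := by
      rw [inflow, sum_div]
      refine sum_congr rfl fun x _ => ?_
      rcases (hF x w).eq_or_lt with h0 | hxw
      · simp [← h0]
      · exact ih (rk x) (hrk ▸ hacyc x w hxw) x w rfl
    have hvisit : u w = outflow F w / outflow F s0 := by
      rw [hu w, hin]
      split_ifs with hs0
      · subst hs0
        simp [inflow, hno_in_s0, hZ]
      · rw [hcons w hs0 hw, zero_add]
    rw [hvisit, mul_div_outflow_eq_div hF hZ hpos]

end FlowNetwork

open FlowNetwork in
/-- A nonnegative flow `F` on a finite DAG (acyclicity witnessed by a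
rank function `rk` increasing along positive-flow edges) with source `s0` and sink `sf`,
satisfying flow conservation at every internal vertex, no edges into `s0` and none out of
`sf`, and total outflow `Z > 0` at the source.  For the induced random walk (choose an
outgoing edge with probability proportional to its flow), the expected-visit function `u`
(characterized by the usual forward recursion) satisfies: the walk reaches `sf` almost
surely (total probability of taking a terminal edge is `1`), and the probability of
traversing the terminal edge `v → sf` equals `F v sf / Z`. -/
theorem stmt0
    {S : Type*} [Fintype S] [DecidableEq S]
    (s0 sf : S) (hne : s0 ≠ sf)
    (F : S → S → ℝ) (hFnonneg : ∀ v w, 0 ≤ F v w)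
    (rk : S → ℕ) (hacyc : ∀ v w, 0 < F v w → rk v < rk w)
    (hno_in_s0 : ∀ v, F v s0 = 0) (hno_out_sf : ∀ v, F sf v = 0)
    (out : S → ℝ) (hout : ∀ v, out v = ∑ w, F v w)
    (hcons : ∀ v, v ≠ s0 → v ≠ sf → (∑ w, F w v) = out v)
    (Z : ℝ) (hZ : Z = out s0) (hZpos : 0 < Z)
    (u : S → ℝ)  -- probability that the walk visits `v`
    (hu : ∀ v, u v = (if v = s0 then 1 else 0) + ∑ w, u w * (F w v / out w)) :
    (∑ v, u v * (F v sf / out v)) = 1 ∧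
      ∀ v, u v * (F v sf / out v) = F v sf / Z := by
  obtain rfl : out = outflow F := funext hout
  subst hZ
  have hterminal : ∀ v, u v * (F v sf / outflow F v) = F v sf / outflow F s0 := fun v =>
    visit_mul_transition_eq hFnonneg hacyc hno_in_s0 hno_out_sf hcons hZpos.ne' hu v sf
  refine ⟨?_, hterminal⟩
  rw [sum_congr rfl fun v _ => hterminal v, ← sum_div]
  exact (div_eq_one_iff_eq hZpos.ne').2
    (inflow_sink_eq_outflow_source hne hno_in_s0 hno_out_sf hcons)
end

section
/- Let I be a finite index set and for each i ∈ I let μ_i, ν_i be nonnegative finite measures on a measurable space O_i with μ_i ≥ ν_i (i.e., μ_i(A) ≥ ν_i(A) for all measurable A) and μ_i ≠ 0. If the product measures satisfy ⊗_{i∈I} μ_i = ⊗_{i∈I} ν_i, then either some μ_i is the zero measure, or μ_i = ν_i for every i ∈ I. -/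
/-! Comparing total masses, `∏ ν_j(univ) = ∏ μ_j(univ)` with `ν_j(univ) ≤ μ_j(univ)` finite and
nonzero forces `ν_j(univ) = μ_j(univ)` for every `j`. The `i`-th marginal of `⊗ μ` is `μ_i` scaled by
the product of the other total masses, so comparing marginals then gives `μ_i = ν_i`. -/

open MeasureTheory

open scoped ENNReal

theorem ENNReal.eq_of_prod_eq_prod_of_le {ι : Type*} {s : Finset ι} {f g : ι → ℝ≥0∞}
    (hfg : ∀ j ∈ s, f j ≤ g j) (hg0 : ∀ j ∈ s, g j ≠ 0) (hg : ∀ j ∈ s, g j ≠ ∞)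
    (hprod : ∏ j ∈ s, f j = ∏ j ∈ s, g j) {i : ι} (hi : i ∈ s) : f i = g i := by
  classical
  have hrest0 : ∏ j ∈ s.erase i, g j ≠ 0 :=
    Finset.prod_ne_zero_iff.mpr fun j hj => hg0 j (Finset.mem_of_mem_erase hj)
  have hrest : ∏ j ∈ s.erase i, g j ≠ ∞ :=
    ENNReal.prod_ne_top fun j hj => hg j (Finset.mem_of_mem_erase hj)
  refine (ENNReal.mul_left_inj hrest0 hrest).mp (le_antisymm (by gcongr; exact hfg i hi) ?_)
  calc g i * ∏ j ∈ s.erase i, g j = ∏ j ∈ s, f j := by rw [Finset.mul_prod_erase _ _ hi, hprod]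
    _ = f i * ∏ j ∈ s.erase i, f j := (Finset.mul_prod_erase _ _ hi).symm
    _ ≤ f i * ∏ j ∈ s.erase i, g j := by
      gcongr with j hj
      exact hfg j (Finset.mem_of_mem_erase hj)

theorem MeasureTheory.Measure.smul_right_injective_of_ne_top {α : Type*} [MeasurableSpace α]
    {c : ℝ≥0∞} (hc0 : c ≠ 0) (hc : c ≠ ∞) : Function.Injective (c • · : Measure α → Measure α) :=
  fun μ ν h => by simpa [smul_smul, ENNReal.inv_mul_cancel hc0 hc] using congrArg (c⁻¹ • ·) h

theorem MeasureTheory.Measure.eq_of_pi_eq_pi_of_le {ι : Type*} [Fintype ι]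
    {α : ι → Type*} [∀ i, MeasurableSpace (α i)] {μ ν : ∀ i, Measure (α i)}
    [∀ i, IsFiniteMeasure (μ i)] [∀ i, SigmaFinite (ν i)]
    (hle : ∀ i, ν i ≤ μ i) (hμ : ∀ i, μ i ≠ 0) (hpi : Measure.pi μ = Measure.pi ν) (i : ι) :
    μ i = ν i := by
  classical
  have hmass : ∀ j, ν j Set.univ = μ j Set.univ := fun j =>
    ENNReal.eq_of_prod_eq_prod_of_le (fun j _ => hle j Set.univ)
      (fun j _ => Measure.measure_univ_ne_zero.mpr (hμ j)) (fun j _ => measure_ne_top _ _)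
      (by simpa [Measure.pi_univ] using congrArg (· Set.univ) hpi.symm) (Finset.mem_univ j)
  have hmarginal := congrArg (·.map (Function.eval i)) hpi
  simp only [Measure.pi_map_eval, hmass] at hmarginal
  exact Measure.smul_right_injective_of_ne_top
    (Finset.prod_ne_zero_iff.mpr fun j _ => Measure.measure_univ_ne_zero.mpr (hμ j))
    (ENNReal.prod_ne_top fun j _ => measure_ne_top _ _) hmarginal

theorem stmt3_general
    {I : Type*} [Fintype I]
    {O : I → Type*} [∀ i, MeasurableSpace (O i)]
    (μ ν : ∀ i, Measure (O i))
    [∀ i, IsFiniteMeasure (μ i)] [∀ i, IsFiniteMeasure (ν i)]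
    (hdom : ∀ i, ν i ≤ μ i)
    (hprod : Measure.pi μ = Measure.pi ν) :
    (∃ i, μ i = 0) ∨ ∀ i, μ i = ν i := by
  rw [or_iff_not_imp_left, not_exists]
  exact fun hne => Measure.eq_of_pi_eq_pi_of_le hdom hne hprod

/-- For finitely many finite measures `μ i ≥ ν i` with each `μ i ≠ 0`,
equality of the product measures `⊗ μ = ⊗ ν` forces either some `μ i = 0` or
componentwise equality `μ i = ν i` for all `i`. -/
theorem stmt3
    {I : Type*} [Fintype I]
    {O : I → Type*} [∀ i, MeasurableSpace (O i)]
    (μ ν : ∀ i, Measure (O i))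
    [∀ i, IsFiniteMeasure (μ i)] [∀ i, IsFiniteMeasure (ν i)]
    (hdom : ∀ i, ν i ≤ μ i)
    (hne : ∀ i, μ i ≠ 0)
    (hprod : Measure.pi μ = Measure.pi ν) :
    (∃ i, μ i = 0) ∨ ∀ i, μ i = ν i :=
  stmt3_general μ ν hdom hprod
end

section
/- Consider a finite tree-structured MDP where each nonterminal state s has children and a flow F satisfying F(s, a) = Σ_{a'} F(T(s,a), a') for nonterminal next states, and F(s, a) = R(T(s,a)) when T(s,a) is terminal. Suppose a behavior policy μ with μ(a|s) > 0 for all legal actions, and let Q^μ be the (undiscounted) action value under μ defined by Q^μ(s,a) = Σ_{a'} μ(a'|s') Q^μ(s', a') for s' = T(s,a) nonterminal, with Q^μ(s,a) = R(s') f(s) at the last step, where f(s_n) = ∏_{t=0}^n 1/μ(a_t|s_t) along the unique path from the root to s_n. If μ is the uniform policy μ(a|s) = 1/|A(s)|, then Q^μ(s,a) = F(s,a) · f(s) for all state-action pairs. -/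
/-!
`F · f` satisfies the same backward recursion as `Q`: passing from `s` to `s' = T s a` the path
weight gains the factor `|A s'|`, which cancels the uniform weight `1 / |A s'|`, and flow matching
turns the sum over children into `F s a`. At terminal transitions both equal `R s' · f s`. Since
depth decreases along transitions, the recursion has at most one solution.
-/

open Finset

section TreeRecursion

variable {S Act : Type*} (A : S → Finset Act) (T : S → Act → S) (term : S → Prop)

theorem eq_of_backward_recursion (depth : S → ℕ)
    (htree : ∀ s, ∀ a ∈ A s, depth (T s a) < depth s)
    {w : S → ℝ} {Q Q' : S → Act → ℝ}
    (hrec : ∀ s, ∀ a ∈ A s, ¬ term (T s a) →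
      Q s a = w (T s a) * ∑ a' ∈ A (T s a), Q (T s a) a')
    (hrec' : ∀ s, ∀ a ∈ A s, ¬ term (T s a) →
      Q' s a = w (T s a) * ∑ a' ∈ A (T s a), Q' (T s a) a')
    (hterm : ∀ s, ∀ a ∈ A s, term (T s a) → Q s a = Q' s a) :
    ∀ s, ∀ a ∈ A s, Q s a = Q' s a := by
  intro s
  induction hd : depth s using Nat.strong_induction_on generalizing s with
  | _ n ih =>
    intro a ha
    by_cases ht : term (T s a)
    · exact hterm s a ha ht
    · rw [hrec s a ha ht, hrec' s a ha ht]
      congr 1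
      exact sum_congr rfl fun a' ha' => ih _ (hd ▸ htree s a ha) _ rfl a' ha'

theorem flow_mul_pathWeight_uniform_rec {F : S → Act → ℝ} {f : S → ℝ}
    (hf : ∀ s, ∀ a ∈ A s, ¬ term (T s a) → f (T s a) = f s * (A (T s a)).card)
    (hFrec : ∀ s, ∀ a ∈ A s, ¬ term (T s a) → F s a = ∑ a' ∈ A (T s a), F (T s a) a')
    (s : S) (a : Act) (ha : a ∈ A s) (ht : ¬ term (T s a)) :
    F s a * f s =
      (1 / ((A (T s a)).card : ℝ)) * ∑ a' ∈ A (T s a), F (T s a) a' * f (T s a) := by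
  rw [hFrec s a ha ht, hf s a ha ht, ← sum_mul]
  rcases (A (T s a)).eq_empty_or_nonempty with hempty | hne
  · simp [hempty]
  · have hcard : ((A (T s a)).card : ℝ) ≠ 0 := Nat.cast_ne_zero.mpr hne.card_pos.ne'
    field_simp

end TreeRecursion

theorem stmt11_general
    {S : Type*} {Act : Type*}
    (A : S → Finset Act) (T : S → Act → S) (term : S → Prop)
    (R : S → ℝ)
    (depth : S → ℕ) (htree : ∀ s, ∀ a ∈ A s, depth (T s a) < depth s)
    (F : S → Act → ℝ) (f : S → ℝ) (Q : S → Act → ℝ)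
    (hf : ∀ s, ∀ a ∈ A s, ¬ term (T s a) →
      f (T s a) = f s * (A (T s a)).card)
    (hFrec : ∀ s, ∀ a ∈ A s, ¬ term (T s a) →
      F s a = ∑ a' ∈ A (T s a), F (T s a) a')
    (hFterm : ∀ s, ∀ a ∈ A s, term (T s a) → F s a = R (T s a))
    (hQrec : ∀ s, ∀ a ∈ A s, ¬ term (T s a) →
      Q s a = (1 / ((A (T s a)).card : ℝ)) * ∑ a' ∈ A (T s a), Q (T s a) a')
    (hQterm : ∀ s, ∀ a ∈ A s, term (T s a) → Q s a = R (T s a) * f s) :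
    ∀ s, ∀ a ∈ A s, Q s a = F s a * f s :=
  eq_of_backward_recursion A T term depth htree (w := fun t => 1 / ((A t).card : ℝ)) hQrec
    (flow_mul_pathWeight_uniform_rec A T term hf hFrec)
    fun s a ha ht => by rw [hQterm s a ha ht, hFterm s a ha ht]

/-- Tree-structured deterministic MDP (tree structure witnessed by a
depth function decreasing along transitions), with legal actions `A s`, transition `T`,
terminal predicate `term`, nonnegative reward `R` on terminal states, and a flow `F`
satisfying the flow-matching recursion.  `f s` is the product of inverse action
probabilities along the unique root-to-`s` path for the uniform behavior policy
`μ(a|s) = 1/|A s|`, so `f (T s a) = f s * |A (T s a)|`.  The action-value `Q` under the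
uniform policy satisfies the backward recursion with terminal condition
`Q s a = R (T s a) * f s`.  Then `Q s a = F s a * f s` for every legal pair. -/
theorem stmt11
    {S : Type*} {Act : Type*} [DecidableEq Act]
    (A : S → Finset Act) (T : S → Act → S) (term : S → Prop)
    (R : S → ℝ) (hR : ∀ s, 0 ≤ R s)
    (depth : S → ℕ) (htree : ∀ s, ∀ a ∈ A s, depth (T s a) < depth s)
    (F : S → Act → ℝ) (f : S → ℝ) (Q : S → Act → ℝ)
    (hf : ∀ s, ∀ a ∈ A s, ¬ term (T s a) →
      f (T s a) = f s * (A (T s a)).card)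
    (hFrec : ∀ s, ∀ a ∈ A s, ¬ term (T s a) →
      F s a = ∑ a' ∈ A (T s a), F (T s a) a')
    (hFterm : ∀ s, ∀ a ∈ A s, term (T s a) → F s a = R (T s a))
    (hQrec : ∀ s, ∀ a ∈ A s, ¬ term (T s a) →
      Q s a = (1 / ((A (T s a)).card : ℝ)) * ∑ a' ∈ A (T s a), Q (T s a) a')
    (hQterm : ∀ s, ∀ a ∈ A s, term (T s a) → Q s a = R (T s a) * f s) :
    ∀ s, ∀ a ∈ A s, Q s a = F s a * f s :=
  stmt11_general A T term R depth htree F f Q hf hFrec hFterm hQrec hQterm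
end

section
/- Let K be a substochastic kernel on a countable state space S with total escape mass: for every s, the probability of never escaping is zero in the sense that Σ_t (δ_s K^t)(S) → 0 as t → ∞. Then the only finite nonnegative measure ν on S with ν K = ν is ν = 0. -/
/-
If `ν K = ν` then `ν = ν K^t` for all `t`, and `ν K^t (S) = ∫ (δ_s K^t)(S) dν(s)`. The integrands are
bounded by `1` (substochasticity) and tend to `0` pointwise (transience), so since `ν` is finite,
dominated convergence gives `ν(S) = 0`.
-/

open MeasureTheory ProbabilityTheory Filter

/-- `iterBind K μ₀ t = μ₀ K^t`: the image of `μ₀` under `t` steps of the kernel `K`. -/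
noncomputable def iterBind {S : Type*} [MeasurableSpace S]
    (K : Kernel S S) (μ₀ : Measure S) : ℕ → Measure S
  | 0 => μ₀
  | (t + 1) => (iterBind K μ₀ t).bind fun x => K x

section iterBind

variable {S : Type*} [MeasurableSpace S] (K : Kernel S S)

lemma measurable_iterBind_dirac (t : ℕ) :
    Measurable fun s => iterBind K (Measure.dirac s) t := by
  induction t with
  | zero => exact Measure.measurable_dirac
  | succ t ih => exact (Measure.measurable_bind' K.measurable).comp ih

lemma iterBind_eq_bind_iterBind_dirac (μ : Measure S) (t : ℕ) :
    iterBind K μ t = μ.bind fun s => iterBind K (Measure.dirac s) t := by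
  induction t with
  | zero => exact Measure.bind_dirac.symm
  | succ t ih =>
    rw [iterBind, ih, Measure.bind_bind (measurable_iterBind_dirac K t).aemeasurable
      K.measurable.aemeasurable]
    rfl

lemma iterBind_eq_self {ν : Measure S} (hfix : (ν.bind fun x => K x) = ν) (t : ℕ) :
    iterBind K ν t = ν := by
  induction t with
  | zero => rfl
  | succ t ih => rw [iterBind, ih, hfix]

lemma iterBind_univ_le {K} (hsub : ∀ s, K s Set.univ ≤ 1) (μ : Measure S) (t : ℕ) :
    iterBind K μ t Set.univ ≤ μ Set.univ := by
  induction t with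
  | zero => rfl
  | succ t ih =>
    calc iterBind K μ (t + 1) Set.univ
        = ∫⁻ x, K x Set.univ ∂(iterBind K μ t) :=
          Measure.bind_apply MeasurableSet.univ K.measurable.aemeasurable
      _ ≤ ∫⁻ _, 1 ∂(iterBind K μ t) := lintegral_mono hsub
      _ = iterBind K μ t Set.univ := by rw [lintegral_one]
      _ ≤ μ Set.univ := ih

lemma tendsto_iterBind_univ_zero {K} (hsub : ∀ s, K s Set.univ ≤ 1)
    (htrans : ∀ s, Tendsto (fun t => iterBind K (Measure.dirac s) t Set.univ) atTop (nhds 0))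
    (μ : Measure S) [IsFiniteMeasure μ] :
    Tendsto (fun t => iterBind K μ t Set.univ) atTop (nhds 0) := by
  have hint : ∀ t, iterBind K μ t Set.univ = ∫⁻ s, iterBind K (Measure.dirac s) t Set.univ ∂μ :=
    fun t => by
      rw [iterBind_eq_bind_iterBind_dirac,
        Measure.bind_apply MeasurableSet.univ (measurable_iterBind_dirac K t).aemeasurable]
  simp_rw [hint]
  simpa using tendsto_lintegral_of_dominated_convergence (fun _ => 1)
    (fun t => (Measure.measurable_coe MeasurableSet.univ).comp (measurable_iterBind_dirac K t))
    (fun t => ae_of_all _ fun s => (iterBind_univ_le hsub _ t).trans (by simp))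
    (by simp [measure_ne_top]) (ae_of_all _ htrans)

end iterBind

theorem stmt18_general
    {S : Type*} [MeasurableSpace S]
    (K : Kernel S S)
    (hsub : ∀ s, K s Set.univ ≤ 1)
    (htrans : ∀ s, Tendsto (fun t => iterBind K (Measure.dirac s) t Set.univ)
      atTop (nhds 0))
    (ν : Measure S) [IsFiniteMeasure ν]
    (hfix : (ν.bind fun x => K x) = ν) :
    ν = 0 := by
  have hconst : Tendsto (fun _ : ℕ => ν Set.univ) atTop (nhds 0) := by
    simpa only [iterBind_eq_self K hfix] using tendsto_iterBind_univ_zero hsub htrans ν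
  exact Measure.measure_univ_eq_zero.mp (tendsto_nhds_unique tendsto_const_nhds hconst)

/-- Let `K` be a substochastic kernel on a countable state space that
is transient in the sense that from every state the surviving mass vanishes:
`(δ_s K^t)(S) → 0` as `t → ∞`.  Then the only finite nonnegative measure `ν` with
`ν K = ν` (a "0-flow") is `ν = 0`. -/
theorem stmt18
    {S : Type*} [MeasurableSpace S] [Countable S]
    (K : Kernel S S) [IsFiniteKernel K]
    (hsub : ∀ s, K s Set.univ ≤ 1)
    (htrans : ∀ s, Tendsto (fun t => iterBind K (Measure.dirac s) t Set.univ)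
      atTop (nhds 0))
    (ν : Measure S) [IsFiniteMeasure ν]
    (hfix : (ν.bind fun x => K x) = ν) :
    ν = 0 :=
  stmt18_general K hsub htrans ν hfix
end
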